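/- For all real α, β ≠ 0, γ, x, all λ ∈ ℕ with λ ≥ 1, and all n ≥ 0: A^{λ,x}_n(α,β,γ) = Σ_{k=0}^{n} C(k+λ-1,k) · Σ_{i=0}^{n} C(n,i) · x^k · (-1)^{k+i} · β^k · k! · S(i,k;α,-β,0) · (γ|-α)_{n-i}, where S(i,k;α,-β,0) = 0 when k > i. -/

import Mathlib

/-! The generalized factorials `n ↦ (t|α)_n` form a sequence of binomial type (Vandermonde), so
shifting the parameter `γ` of `S(n,k;α,β,γ)` expands it into the `S(i,k;α,β,0)` weighted by
`C(n,i) (-γ|α)_{n-i}`; finally `(-γ|α)_m = (-1)^m (γ|-α)_m` turns the signs into `(-1)^(k+i)`. -/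

open Finset

/-- Generalized factorial polynomial `(t|α)_n = ∏_{j=0}^{n-1} (t - jα)`. -/
noncomputable def gfact (t α : ℝ) (n : ℕ) : ℝ := ∏ j ∈ Finset.range n, (t - j * α)

/-- Hsu–Shiue generalized Stirling numbers (explicit formula, β ≠ 0). -/
noncomputable def HS (n k : ℕ) (α β γ : ℝ) : ℝ :=
  (1 / (β ^ k * (Nat.factorial k : ℝ))) *
    ∑ s ∈ Finset.range (k + 1), (-1 : ℝ) ^ (k - s) * (Nat.choose k s : ℝ) * gfact (β * s + γ) α n

/-- Second-type higher order generalized geometric polynomials. -/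
noncomputable def A (lam : ℕ) (x : ℝ) (n : ℕ) (α β γ : ℝ) : ℝ :=
  ∑ k ∈ Finset.range (n + 1),
    (Nat.choose (k + lam - 1) k : ℝ) * (-1 : ℝ) ^ (n + k) * β ^ k * (Nat.factorial k : ℝ) *
      HS n k α (-β) (-γ) * x ^ k

lemma gfact_succ (t α : ℝ) (n : ℕ) : gfact t α (n + 1) = gfact t α n * (t - n * α) :=
  prod_range_succ _ n

lemma gfact_neg (t α : ℝ) (n : ℕ) : gfact (-t) α n = (-1) ^ n * gfact t (-α) n := by
  induction n with
  | zero => simp [gfact]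
  | succ n ih => rw [gfact_succ, gfact_succ, ih]; ring

lemma gfact_add_antidiagonal (t u α : ℝ) (n : ℕ) :
    gfact (t + u) α n =
      ∑ ij ∈ antidiagonal n, (n.choose ij.1 : ℝ) * gfact t α ij.1 * gfact u α ij.2 := by
  induction n with
  | zero => simp [gfact]
  | succ n ih =>
    simp only [mul_assoc]
    rw [Finset.sum_antidiagonal_choose_succ_mul (fun i j ↦ gfact t α i * gfact u α j), gfact_succ,
      ih, sum_mul, add_comm, ← sum_add_distrib]
    refine sum_congr rfl fun ij hij ↦ ?_
    rw [HasAntidiagonal.mem_antidiagonal] at hij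
    have hn : (n : ℝ) = ij.1 + ij.2 := by exact_mod_cast hij.symm
    rw [← Nat.choose_symm_of_eq_add hij.symm, gfact_succ, gfact_succ, hn]
    ring

lemma gfact_add (t u α : ℝ) (n : ℕ) :
    gfact (t + u) α n =
      ∑ i ∈ range (n + 1), (n.choose i : ℝ) * gfact t α i * gfact u α (n - i) := by
  rw [gfact_add_antidiagonal, Finset.Nat.sum_antidiagonal_eq_sum_range_succ
    (fun i j ↦ (n.choose i : ℝ) * gfact t α i * gfact u α j)]

lemma HS_add (n k : ℕ) (α β γ δ : ℝ) :
    HS n k α β (γ + δ) =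
      ∑ i ∈ range (n + 1), (n.choose i : ℝ) * HS i k α β γ * gfact δ α (n - i) := by
  simp only [HS, ← add_assoc, gfact_add _ δ, mul_sum, sum_mul]
  rw [sum_comm]
  exact sum_congr rfl fun i _ ↦ sum_congr rfl fun s _ ↦ by ring

lemma neg_one_pow_add_mul_neg_one_pow_sub {n i : ℕ} (k : ℕ) (hi : i ≤ n) :
    (-1 : ℝ) ^ (n + k) * (-1) ^ (n - i) = (-1) ^ (k + i) := by
  rw [← pow_add, show n + k + (n - i) = k + i + 2 * (n - i) by omega, pow_add, pow_mul]
  norm_num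

theorem stmt9_general (α β γ x : ℝ) (lam : ℕ) (n : ℕ) :
    A lam x n α β γ =
      ∑ k ∈ Finset.range (n + 1), (Nat.choose (k + lam - 1) k : ℝ) *
        ∑ i ∈ Finset.range (n + 1),
          (Nat.choose n i : ℝ) * x ^ k * (-1 : ℝ) ^ (k + i) * β ^ k * (Nat.factorial k : ℝ) *
            HS i k α (-β) 0 * gfact γ (-α) (n - i) := by
  refine sum_congr rfl fun k _ ↦ ?_
  rw [← zero_add (-γ), HS_add, mul_sum, sum_mul, mul_sum]
  refine sum_congr rfl fun i hi ↦ ?_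
  have hsign := neg_one_pow_add_mul_neg_one_pow_sub k (Nat.lt_succ_iff.mp (mem_range.mp hi))
  rw [gfact_neg, ← hsign]
  ring

theorem stmt9 (α β γ x : ℝ) (hβ : β ≠ 0) (lam : ℕ) (hlam : 1 ≤ lam) (n : ℕ) :
    A lam x n α β γ =
      ∑ k ∈ Finset.range (n + 1), (Nat.choose (k + lam - 1) k : ℝ) *
        ∑ i ∈ Finset.range (n + 1),
          (Nat.choose n i : ℝ) * x ^ k * (-1 : ℝ) ^ (k + i) * β ^ k * (Nat.factorial k : ℝ) *
            HS i k α (-β) 0 * gfact γ (-α) (n - i) :=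
  stmt9_general α β γ x lam n
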